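/- arXiv:1108.1179 — 4 statements merged into one kernel-verified Lean document; each statement's English description precedes it below -/
import Mathlib

section
/- Let λ, μ > 0 with ρ = λ/μ < 1, and let i ≥ 1 be an integer. The function t ↦ EL_i(t) defined by the explicit integral formula EL_i(t) = (2/π)·ρ^{(1−i)/2}·∫₀^π e^{−μ t γ(y)}/γ(y)² · a_i(y)·sin(y) dy + ρ/(1−ρ) is differentiable at t = 0 and its derivative at t = 0 equals λ − μ. -/
open Real MeasureTheory Set Filter

/-- γ(y) = 1 + ρ − 2√ρ·cos(y). -/
noncomputable def gam (ρ y : ℝ) : ℝ := 1 + ρ - 2 * Real.sqrt ρ * Real.cos y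

/-- a_k(y) = sin(k·y) − √ρ·sin((k+1)·y). -/
noncomputable def aco (ρ : ℝ) (k : ℕ) (y : ℝ) : ℝ :=
  Real.sin ((k : ℝ) * y) - Real.sqrt ρ * Real.sin (((k : ℝ) + 1) * y)

/-- Transient expected queue length of an M/M/1 queue started with `i` customers. -/
noncomputable def EL (lam mu : ℝ) (i : ℕ) (t : ℝ) : ℝ :=
  (2 / Real.pi) * (lam / mu) ^ ((1 - (i : ℝ)) / 2) *
    (∫ y in (0 : ℝ)..Real.pi,
      Real.exp (-(mu * t * gam (lam / mu) y)) / (gam (lam / mu) y) ^ 2 *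
        (aco (lam / mu) i y * Real.sin y)) +
  (lam / mu) / (1 - lam / mu)

/-- Transient probability that an M/M/1 queue started with `i` customers has `j` at time `t`. -/
noncomputable def pq (lam mu : ℝ) (i j : ℕ) (t : ℝ) : ℝ :=
  (2 / Real.pi) * (lam / mu) ^ (((j : ℝ) - (i : ℝ)) / 2) *
    (∫ y in (0 : ℝ)..Real.pi,
      Real.exp (-(mu * t * gam (lam / mu) y)) / gam (lam / mu) y *
        (aco (lam / mu) i y * aco (lam / mu) j y)) +
  (1 - lam / mu) * (lam / mu) ^ j

/-- Erlang(n) density with rate `mu`: f_n(t) = μⁿ t^{n−1} e^{−μt}/(n−1)!. -/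
noncomputable def erl (mu : ℝ) (n : ℕ) (t : ℝ) : ℝ :=
  mu ^ n * t ^ (n - 1) * Real.exp (-(mu * t)) / (Nat.factorial (n - 1) : ℝ)

/-- Expected total time to complete queue with `a` customers first, then queue with `b`. -/
noncomputable def ETT (lam mu : ℝ) (a b : ℕ) : ℝ :=
  ((a : ℝ) + 2) / mu + (1 / mu) * ∫ t in Set.Ioi (0 : ℝ), erl mu (a + 1) t * EL lam mu b t

/-! Differentiating under the integral sign, `EL_i'(0) = -μ (2/π) ρ^((1-i)/2) ∫₀^π a_i sin / γ`.
With `r = √ρ`, `a_i(y) / γ(y) = ∑ₖ rᵏ sin((i - k) y)`, the imaginary part of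
`exp(I i y) / (1 - r exp(-I y))`. Integrating term by term against `sin y`, orthogonality keeps only
`k = i ∓ 1`, so the integral is `(π/2)(r^(i-1) - r^(i+1))` and the derivative is
`-μ (1 - ρ) = λ - μ`. -/

theorem sq_one_sub_abs_le (r y : ℝ) : (1 - |r|) ^ 2 ≤ 1 + r ^ 2 - 2 * r * cos y := by
  have h : r * cos y ≤ |r| := by
    calc r * cos y ≤ |r * cos y| := le_abs_self _
      _ = |r| * |cos y| := abs_mul _ _
      _ ≤ |r| := mul_le_of_le_one_right (abs_nonneg r) (abs_cos_le_one y)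
  nlinarith [sq_abs r]

theorem abs_sqrt_lt_one {ρ : ℝ} (hρ : ρ < 1) : |√ρ| < 1 := by
  rw [abs_of_nonneg (sqrt_nonneg ρ), sqrt_lt' one_pos, one_pow]
  exact hρ

theorem gam_pos {ρ : ℝ} (hρ0 : 0 ≤ ρ) (hρ1 : ρ < 1) (y : ℝ) : 0 < gam ρ y := by
  have h := sq_one_sub_abs_le (√ρ) y
  rw [sq_sqrt hρ0] at h
  exact (pow_pos (sub_pos.mpr (abs_sqrt_lt_one hρ1)) 2).trans_le h

theorem hasSum_pow_mul_sin_sub_mul {r : ℝ} (hr : |r| < 1) (x y : ℝ) :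
    HasSum (fun k : ℕ => r ^ k * sin ((x - k) * y))
      ((sin (x * y) - r * sin ((x + 1) * y)) / (1 + r ^ 2 - 2 * r * cos y)) := by
  have hq : ‖(r : ℂ) * Complex.exp ((-y : ℝ) * Complex.I)‖ < 1 := by
    simpa [Complex.norm_exp] using hr
  -- the imaginary part of `e^{ixy} ∑ (r e^{-iy})^k = e^{ixy} / (1 - r e^{-iy})`
  have h := ((hasSum_geometric_of_norm_lt_one hq).mul_left
    (Complex.exp ((x * y : ℝ) * Complex.I))).mapL Complex.imCLM
  convert h using 2 with k
  · rw [mul_pow, ← Complex.exp_nat_mul, mul_left_comm, ← Complex.exp_add,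
      show ((x * y : ℝ) : ℂ) * Complex.I + k * ((-y : ℝ) * Complex.I)
        = ((x - k) * y : ℝ) * Complex.I by push_cast; ring]
    simp only [Complex.imCLM_apply, ← Complex.ofReal_pow, Complex.im_ofReal_mul,
      Complex.exp_ofReal_mul_I_im]
  · simp only [Complex.imCLM_apply, Complex.mul_im, Complex.inv_re, Complex.inv_im,
      Complex.normSq_apply, Complex.sub_re, Complex.sub_im, Complex.one_re, Complex.one_im,
      Complex.mul_re, Complex.exp_ofReal_mul_I_re, Complex.exp_ofReal_mul_I_im,
      Complex.ofReal_re, Complex.ofReal_im, cos_neg, sin_neg, zero_mul, add_zero, sub_zero,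
      zero_sub, mul_neg, neg_neg, neg_zero]
    have hnormSq : (1 - r * cos y) * (1 - r * cos y) + r * sin y * (r * sin y)
        = 1 + r ^ 2 - 2 * r * cos y := by
      linear_combination r ^ 2 * sin_sq_add_cos_sq y
    rw [hnormSq, add_mul, one_mul, sin_add]
    field_simp
    ring

theorem integral_cos_int_mul (m : ℤ) :
    ∫ y in (0 : ℝ)..π, cos (m * y) = if m = 0 then π else 0 := by
  split_ifs with hm
  · simp [hm]
  · have hm' : (m : ℝ) ≠ 0 := Int.cast_ne_zero.mpr hm
    simp [intervalIntegral.integral_comp_mul_left (fun y => cos y) hm', sin_int_mul_pi]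

theorem integral_sin_int_mul_mul_sin (m : ℤ) :
    ∫ y in (0 : ℝ)..π, sin (m * y) * sin y
      = if m = 1 then π / 2 else if m = -1 then -(π / 2) else 0 := by
  have hprod : ∀ y : ℝ,
      sin (m * y) * sin y = (cos (((m - 1 : ℤ) : ℝ) * y) - cos (((m + 1 : ℤ) : ℝ) * y)) / 2 := by
    intro y
    push_cast
    rw [sub_mul, add_mul, one_mul, cos_sub, cos_add]
    ring
  simp only [hprod]
  rw [intervalIntegral.integral_div, intervalIntegral.integral_sub
    ((by fun_prop : Continuous _).intervalIntegrable _ _)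
    ((by fun_prop : Continuous _).intervalIntegrable _ _),
    integral_cos_int_mul, integral_cos_int_mul]
  by_cases h1 : m = 1
  · simp [h1]
  by_cases h2 : m = -1
  · norm_num [h2, neg_div]
  · rw [if_neg (by omega), if_neg (by omega), if_neg h1, if_neg h2]
    norm_num

theorem integral_aco_mul_sin_div_gam {ρ : ℝ} (hρ0 : 0 ≤ ρ) (hρ1 : ρ < 1) {i : ℕ} (hi : 1 ≤ i) :
    ∫ y in (0 : ℝ)..π, aco ρ i y * sin y / gam ρ y = π / 2 * (√ρ ^ (i - 1) - √ρ ^ (i + 1)) := by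
  set r := √ρ
  have hr : |r| < 1 := abs_sqrt_lt_one hρ1
  have hsum : ∀ y, HasSum (fun k : ℕ => r ^ k * sin ((i - k) * y) * sin y)
      (aco ρ i y * sin y / gam ρ y) := by
    intro y
    have h := (hasSum_pow_mul_sin_sub_mul hr i y).mul_right (sin y)
    rwa [show (sin (i * y) - r * sin ((i + 1) * y)) / (1 + r ^ 2 - 2 * r * cos y) * sin y
        = aco ρ i y * sin y / gam ρ y by rw [aco, gam, sq_sqrt hρ0]; ring] at h
  have hterm : ∀ k : ℕ, ∫ y in (0 : ℝ)..π, r ^ k * sin ((i - k) * y) * sin y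
      = r ^ k * if (i : ℤ) - k = 1 then π / 2 else if (i : ℤ) - k = -1 then -(π / 2) else 0 := by
    intro k
    simp_rw [mul_assoc]
    rw [intervalIntegral.integral_const_mul, ← integral_sin_int_mul_mul_sin]
    push_cast
    rfl
  have hints := intervalIntegral.hasSum_integral_of_dominated_convergence
    (a := 0) (b := π) (μ := volume) (fun k _ => |r| ^ k)
    (fun k => (by fun_prop : Continuous _).aestronglyMeasurable)
    (fun k => .of_forall fun y _ => by
      rw [norm_mul, norm_mul, norm_pow, Real.norm_eq_abs, mul_assoc]
      exact mul_le_of_le_one_right (by positivity) (mul_le_one₀ (abs_sin_le_one _)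
        (norm_nonneg _) (abs_sin_le_one _)))
    (.of_forall fun _ _ => summable_geometric_of_lt_one (abs_nonneg r) hr)
    intervalIntegrable_const (.of_forall fun y _ => hsum y)
  simp only [hterm] at hints
  rw [hints.unique (hasSum_sum_of_ne_finset_zero (s := {i - 1, i + 1}) ?_),
    Finset.sum_pair (by omega), if_pos (by omega), if_neg (by omega), if_pos (by omega)]
  · ring
  · intro k hk
    simp only [Finset.mem_insert, Finset.mem_singleton, not_or] at hk
    rw [if_neg (by omega), if_neg (by omega), mul_zero]

theorem hasDerivAt_intervalIntegral_exp_mul {g f : ℝ → ℝ} (hg : Continuous g) (hf : Continuous f)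
    (a b t₀ : ℝ) :
    HasDerivAt (fun t => ∫ y in a..b, exp (t * g y) * f y)
      (∫ y in a..b, g y * exp (t₀ * g y) * f y) t₀ := by
  set F' : ℝ → ℝ → ℝ := fun t y => g y * exp (t * g y) * f y
  have hF' : Continuous (Function.uncurry F') := by unfold F'; fun_prop
  obtain ⟨M, hM⟩ := ((isCompact_closedBall t₀ 1).prod (isCompact_uIcc (a := a) (b := b)))
    |>.exists_bound_of_continuousOn hF'.continuousOn
  refine (intervalIntegral.hasDerivAt_integral_of_dominated_loc_of_deriv_le (F' := F')
    (bound := fun _ => M) (Metric.ball_mem_nhds t₀ one_pos) ?_ ?_ ?_ ?_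
    intervalIntegrable_const ?_).2
  · exact .of_forall fun t => (by fun_prop : Continuous _).aestronglyMeasurable
  · exact (by fun_prop : Continuous _).intervalIntegrable _ _
  · exact (by fun_prop : Continuous (F' t₀)).aestronglyMeasurable
  · exact .of_forall fun y hy t ht =>
      hM (t, y) ⟨Metric.ball_subset_closedBall ht, uIoc_subset_uIcc hy⟩
  · exact .of_forall fun y _ t _ => by
      simpa [F', mul_comm (g y)] using ((hasDerivAt_mul_const (g y)).exp.mul_const (f y))

theorem rpow_mul_sqrt_pow_sub {ρ : ℝ} (hρ : 0 < ρ) {i : ℕ} (hi : 1 ≤ i) :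
    ρ ^ ((1 - (i : ℝ)) / 2) * (√ρ ^ (i - 1) - √ρ ^ (i + 1)) = 1 - ρ := by
  obtain ⟨n, rfl⟩ := Nat.exists_eq_add_of_le hi
  have h : ρ ^ ((1 - ((1 + n : ℕ) : ℝ)) / 2) * √ρ ^ n = 1 := by
    rw [sqrt_eq_rpow, ← rpow_natCast, ← rpow_mul hρ.le, ← rpow_add hρ]
    push_cast
    ring_nf
    exact rpow_zero ρ
  calc _ = ρ ^ ((1 - ((1 + n : ℕ) : ℝ)) / 2) * √ρ ^ n * (1 - √ρ ^ 2) := by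
        rw [show 1 + n - 1 = n by omega, show 1 + n + 1 = n + 2 by omega]; ring
    _ = 1 - ρ := by rw [h, sq_sqrt hρ.le, one_mul]

/-- The derivative of EL_i at t = 0 equals λ − μ, for i ≥ 1. -/
theorem EL_hasDerivAt_zero (lam mu : ℝ) (hlam : 0 < lam) (hmu : 0 < mu)
    (hρ : lam / mu < 1) (i : ℕ) (hi : 1 ≤ i) :
    HasDerivAt (fun t : ℝ => EL lam mu i t) (lam - mu) 0 := by
  set ρ := lam / mu with hρ_def
  have hρ0 : 0 < ρ := div_pos hlam hmu
  have hγ : ∀ y, gam ρ y ≠ 0 := fun y => (gam_pos hρ0.le hρ y).ne'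
  have hγc : Continuous (gam ρ) := by unfold gam; fun_prop
  have hI := hasDerivAt_intervalIntegral_exp_mul (g := fun y => -(mu * gam ρ y))
    (f := fun y => aco ρ i y * sin y / gam ρ y ^ 2) (by fun_prop)
    ((by unfold aco; fun_prop : Continuous fun y => aco ρ i y * sin y).div (hγc.pow 2)
      fun y => pow_ne_zero 2 (hγ y)) 0 π 0
  have hI' : ∫ y in (0 : ℝ)..π, -(mu * gam ρ y) * exp (0 * -(mu * gam ρ y))
      * (aco ρ i y * sin y / gam ρ y ^ 2) = -mu * (π / 2 * (√ρ ^ (i - 1) - √ρ ^ (i + 1))) := by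
    rw [← integral_aco_mul_sin_div_gam hρ0.le hρ hi, ← intervalIntegral.integral_const_mul]
    congr 1 with y
    rw [zero_mul, exp_zero]
    field_simp [hγ y]
  have hEL : (fun t => EL lam mu i t) = fun t => 2 / π * ρ ^ ((1 - (i : ℝ)) / 2) *
      (∫ y in (0 : ℝ)..π, exp (t * -(mu * gam ρ y)) * (aco ρ i y * sin y / gam ρ y ^ 2))
      + ρ / (1 - ρ) := by
    ext t
    simp only [EL, ← hρ_def]
    congr 3 with y
    rw [show -(mu * t * gam ρ y) = t * -(mu * gam ρ y) by ring]
    ring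
  rw [hEL]
  refine ((hI.const_mul _).add_const _).congr_deriv ?_
  calc 2 / π * ρ ^ ((1 - (i : ℝ)) / 2) * _
      = -mu * (ρ ^ ((1 - (i : ℝ)) / 2) * (√ρ ^ (i - 1) - √ρ ^ (i + 1))) := by
        rw [hI']; field_simp
    _ = lam - mu := by
        rw [rpow_mul_sqrt_pow_sub hρ0 hi, hρ_def]; field_simp; ring
end

section
/- Let λ, μ > 0 with ρ = λ/μ < 1, and let i ≥ 0 be an integer. Then EL_i(0) = i, i.e. (2/π)·ρ^{(1−i)/2}·∫₀^π (1/γ(y)²)·a_i(y)·sin(y) dy + ρ/(1−ρ) = i. -/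
open Real MeasureTheory Set Filter

/-!
Write `r = √ρ`, so that `γ(y) = 1 + r² - 2r cos y` is the denominator of the Poisson kernel of the
unit disc at the point `r`. Since `γ' = 2r sin`, integrating by parts against `-1/(2rγ)` (the
boundary terms vanish because `a_i(0) = a_i(π) = 0`) turns the integral at `t = 0` into
`(1/2r) ∫₀^π a_i'/γ`, and `a_i'` is a combination of `cos(i y)` and `cos((i+1) y)`. The Poisson
integral formula for the harmonic function `Re z^m` gives `∫₀^π cos(m y)/γ(y) dy = π r^m/(1 - r²)`,
after which `EL_i(0) = i` is algebra.
-/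

lemma one_add_sq_sub_two_mul_cos_pos {r : ℝ} (hr : |r| < 1) (y : ℝ) :
    0 < 1 + r ^ 2 - 2 * r * cos y := by
  have hcos : r * cos y ≤ |r| := (le_abs_self _).trans <| by
    rw [abs_mul]; exact mul_le_of_le_one_right (abs_nonneg r) (abs_cos_le_one y)
  nlinarith [sq_abs r, mul_pos (sub_pos.2 hr) (sub_pos.2 hr)]

lemma norm_exp_mul_I_sub_ofReal_sq (r θ : ℝ) :
    ‖Complex.exp (θ * Complex.I) - r‖ ^ 2 = 1 + r ^ 2 - 2 * r * cos θ := by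
  rw [← Complex.normSq_eq_norm_sq, Complex.normSq_apply]
  simp only [Complex.sub_re, Complex.exp_ofReal_mul_I_re, Complex.ofReal_re, Complex.sub_im,
    Complex.exp_ofReal_mul_I_im, Complex.ofReal_im, sub_zero]
  nlinarith [sin_sq_add_cos_sq θ]

lemma integral_zero_two_pi_eq_two_mul_of_symm {g : ℝ → ℝ}
    (hg : IntervalIntegrable g volume 0 (2 * π)) (hsymm : ∀ θ, g (2 * π - θ) = g θ) :
    ∫ θ in 0..2 * π, g θ = 2 * ∫ θ in 0..π, g θ := by
  have hπ := pi_pos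
  have hleft : IntervalIntegrable g volume 0 π := hg.mono_set <| by
    rw [uIcc_of_le hπ.le, uIcc_of_le (by positivity)]
    exact Icc_subset_Icc le_rfl (by linarith)
  have hright : IntervalIntegrable g volume π (2 * π) := hg.mono_set <| by
    rw [uIcc_of_le (by linarith), uIcc_of_le (by positivity)]
    exact Icc_subset_Icc hπ.le le_rfl
  have hreflect : ∫ θ in π..2 * π, g θ = ∫ θ in 0..π, g θ := by
    conv_rhs => rw [← intervalIntegral.integral_congr (fun θ _ => hsymm θ)]
    rw [intervalIntegral.integral_comp_sub_left]
    ring_nf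
  rw [← intervalIntegral.integral_add_adjacent_intervals hleft hright, hreflect]
  ring

lemma circleAverage_poissonKernel_smul_re_pow {r : ℝ} (hr : |r| < 1) (m : ℕ) :
    Real.circleAverage (poissonKernel 0 r • fun z : ℂ => (z ^ m).re) 0 1 = r ^ m := by
  have hharm : InnerProductSpace.HarmonicOnNhd (fun z : ℂ => (z ^ m).re) (Metric.closedBall 0 1) :=
    fun z _ => (analyticAt_id.pow m).harmonicAt_re
  rw [hharm.circleAverage_poissonKernel_smul (by simpa using hr)]
  norm_cast

lemma integral_cos_nat_mul_div_one_add_sq_sub_two_mul_cos {r : ℝ} (hr : |r| < 1) (m : ℕ) :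
    ∫ y in 0..π, cos (m * y) / (1 + r ^ 2 - 2 * r * cos y) = π * r ^ m / (1 - r ^ 2) := by
  have hden y := (one_add_sq_sub_two_mul_cos_pos hr y).ne'
  have hr2 : 1 - r ^ 2 ≠ 0 := by nlinarith [abs_mul_abs_self r, abs_nonneg r]
  set g : ℝ → ℝ := fun y => cos (m * y) / (1 + r ^ 2 - 2 * r * cos y)
  have hg : Continuous g := by fun_prop
  have hsymm θ : g (2 * π - θ) = g θ := by
    simp only [g, cos_two_pi_sub, mul_sub, ← cos_nat_mul_two_pi_sub (m * θ) m]
  have hkernel θ : (poissonKernel 0 r • fun z : ℂ => (z ^ m).re) (circleMap 0 1 θ)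
      = (1 - r ^ 2) * g θ := by
    have hre : (Complex.exp (θ * Complex.I) ^ m).re = cos (m * θ) := by
      rw [← Complex.exp_nat_mul, ← mul_assoc, ← Complex.ofReal_natCast, ← Complex.ofReal_mul,
        Complex.exp_ofReal_mul_I_re]
    simp only [Pi.smul_apply', smul_eq_mul, poissonKernel_def, circleMap, g, Complex.ofReal_one,
      one_mul, zero_add, sub_zero, Complex.norm_exp_ofReal_mul_I, one_pow, Complex.norm_real,
      norm_eq_abs, sq_abs, norm_exp_mul_I_sub_ofReal_sq, hre]
    ring
  have havg := circleAverage_poissonKernel_smul_re_pow hr m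
  rw [Real.circleAverage_def, smul_eq_mul] at havg
  simp_rw [hkernel] at havg
  rw [intervalIntegral.integral_const_mul,
    integral_zero_two_pi_eq_two_mul_of_symm (hg.intervalIntegrable _ _) hsymm] at havg
  field_simp at havg ⊢
  linarith

lemma hasDerivAt_sin_nat_mul_sub_mul_sin (r : ℝ) (i : ℕ) (y : ℝ) :
    HasDerivAt (fun y => sin (i * y) - r * sin ((i + 1) * y))
      (i * cos (i * y) - r * (i + 1) * cos ((i + 1) * y)) y := by
  have hi := ((hasDerivAt_id y).const_mul (i : ℝ)).sin
  have hsucc := ((hasDerivAt_id y).const_mul ((i : ℝ) + 1)).sin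
  refine (hi.fun_sub (hsucc.const_mul r)).congr_deriv ?_
  simp only [id]
  ring

lemma hasDerivAt_neg_inv_two_mul_one_add_sq_sub_two_mul_cos {r : ℝ} (hr0 : r ≠ 0)
    (hr : |r| < 1) (y : ℝ) :
    HasDerivAt (fun y => -(2 * r * (1 + r ^ 2 - 2 * r * cos y))⁻¹)
      (sin y / (1 + r ^ 2 - 2 * r * cos y) ^ 2) y := by
  have hden := (one_add_sq_sub_two_mul_cos_pos hr y).ne'
  have h := ((((hasDerivAt_cos y).const_mul (2 * r)).const_sub (1 + r ^ 2)).const_mul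
    (2 * r)).fun_inv (mul_ne_zero (by simpa using hr0) hden)
  refine h.fun_neg.congr_deriv ?_
  field_simp

lemma integral_sin_sub_mul_sin_mul_sin_div_sq {r : ℝ} (hr0 : r ≠ 0) (hr : |r| < 1) (i : ℕ) :
    ∫ y in 0..π, (sin (i * y) - r * sin ((i + 1) * y)) * sin y / (1 + r ^ 2 - 2 * r * cos y) ^ 2
      = π * r ^ i * (i - (i + 1) * r ^ 2) / (2 * r * (1 - r ^ 2)) := by
  have hden y := (one_add_sq_sub_two_mul_cos_pos hr y).ne'
  have hden_sq y := pow_ne_zero 2 (hden y)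
  have hr2 : 1 - r ^ 2 ≠ 0 := by nlinarith [abs_mul_abs_self r, abs_nonneg r]
  have hibp := intervalIntegral.integral_mul_deriv_eq_deriv_mul (a := 0) (b := π)
    (fun y _ => hasDerivAt_sin_nat_mul_sub_mul_sin r i y)
    (fun y _ => hasDerivAt_neg_inv_two_mul_one_add_sq_sub_two_mul_cos hr0 hr y)
    (by apply Continuous.intervalIntegrable; fun_prop)
    (by apply Continuous.intervalIntegrable; fun_prop)
  have hsinπ : sin ((i + 1) * π) = 0 := by exact_mod_cast sin_nat_mul_pi (i + 1)
  simp only [mul_zero, sin_zero, sin_nat_mul_pi, hsinπ, zero_mul, sub_zero, zero_sub] at hibp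
  have hcos := integral_cos_nat_mul_div_one_add_sq_sub_two_mul_cos hr i
  have hcos_succ := integral_cos_nat_mul_div_one_add_sq_sub_two_mul_cos hr (i + 1)
  push_cast at hcos_succ
  have hsplit y : (i * cos (i * y) - r * (i + 1) * cos ((i + 1) * y)) *
      -(2 * r * (1 + r ^ 2 - 2 * r * cos y))⁻¹
      = -(2 * r)⁻¹ * (i * (cos (i * y) / (1 + r ^ 2 - 2 * r * cos y))
        - r * (i + 1) * (cos ((i + 1) * y) / (1 + r ^ 2 - 2 * r * cos y))) := by
    field_simp
  simp_rw [hsplit] at hibp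
  rw [intervalIntegral.integral_const_mul, intervalIntegral.integral_sub
      (by apply Continuous.intervalIntegrable; fun_prop)
      (by apply Continuous.intervalIntegrable; fun_prop),
    intervalIntegral.integral_const_mul, intervalIntegral.integral_const_mul, hcos,
    hcos_succ] at hibp
  simp_rw [mul_div_assoc]
  rw [hibp]
  field_simp
  ring

lemma sq_rpow_one_sub_div_two_mul_pow {r : ℝ} (hr : 0 ≤ r) (i : ℕ) :
    (r ^ 2) ^ ((1 - i) / 2 : ℝ) * r ^ i = r := by
  rw [← rpow_natCast, ← rpow_natCast, ← rpow_mul hr, ← rpow_add' hr] <;> push_cast <;> ring_nf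
  · exact rpow_one r
  · norm_num

/-- EL_i(0) = i. -/
theorem EL_at_zero (lam mu : ℝ) (hlam : 0 < lam) (hmu : 0 < mu)
    (hρ : lam / mu < 1) (i : ℕ) :
    EL lam mu i 0 = (i : ℝ) := by
  obtain ⟨r, hr0, hρr⟩ : ∃ r > 0, lam / mu = r ^ 2 :=
    ⟨√(lam / mu), sqrt_pos.2 (div_pos hlam hmu), (sq_sqrt (div_pos hlam hmu).le).symm⟩
  have hr1 : r < 1 := by nlinarith
  have hr2 : 1 - r ^ 2 ≠ 0 := by nlinarith
  have hintegrand y :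
      exp (-(mu * 0 * gam (r ^ 2) y)) / gam (r ^ 2) y ^ 2 * (aco (r ^ 2) i y * sin y)
        = (sin (i * y) - r * sin ((i + 1) * y)) * sin y / (1 + r ^ 2 - 2 * r * cos y) ^ 2 := by
    simp only [gam, aco, sqrt_sq hr0.le, mul_zero, zero_mul, neg_zero, exp_zero]
    ring
  rw [EL, hρr, intervalIntegral.integral_congr (fun y _ => hintegrand y),
    integral_sin_sub_mul_sin_mul_sin_div_sq hr0.ne' (by rwa [abs_of_pos hr0]) i]
  have hpow := sq_rpow_one_sub_div_two_mul_pow hr0.le i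
  generalize (r ^ 2) ^ ((1 - i) / 2 : ℝ) = c at hpow ⊢
  field_simp
  linear_combination (i - (i + 1) * r ^ 2) * hpow
end

section
/- Let λ, μ > 0 with ρ = λ/μ < 1, and let i, j ≥ 0 be integers. Then p_{ij}(t) → (1−ρ)·ρ^j as t → ∞; equivalently, the integral term (2/π)·ρ^{(j−i)/2}·∫₀^π e^{−μ t γ(y)}/γ(y) · a_i(y)·a_j(y) dy tends to 0 as t → ∞. -/
open Real MeasureTheory Set Filter

/-- p_{ij}(t) → (1−ρ)·ρ^j as t → ∞. -/
theorem pq_tendsto_steadyState (lam mu : ℝ) (hlam : 0 < lam) (hmu : 0 < mu)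
    (hρ : lam / mu < 1) (i j : ℕ) :
    Filter.Tendsto (fun t : ℝ => pq lam mu i j t) Filter.atTop
      (nhds ((1 - lam / mu) * (lam / mu) ^ j)) := by
  have hρ0 : 0 < lam / mu := div_pos hlam hmu
  have hs1 : Real.sqrt (lam / mu) < 1 := by
    rw [show (1:ℝ) = Real.sqrt 1 by simp]
    exact Real.sqrt_lt_sqrt hρ0.le hρ
  have hsnn : 0 ≤ Real.sqrt (lam / mu) := Real.sqrt_nonneg _
  have hsq : Real.sqrt (lam / mu) ^ 2 = lam / mu := Real.sq_sqrt hρ0.le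
  set c : ℝ := (1 - Real.sqrt (lam / mu)) ^ 2 with hc
  have hc0 : 0 < c := by
    have : 0 < 1 - Real.sqrt (lam / mu) := by linarith
    positivity
  have hgam : ∀ y, c ≤ gam (lam / mu) y := by
    intro y
    have h1 := Real.cos_le_one y
    unfold gam
    nlinarith [hsnn]
  have ha : ∀ (k : ℕ) (y : ℝ), |aco (lam / mu) k y| ≤ 2 := by
    intro k y
    unfold aco
    have h1 := Real.neg_one_le_sin ((k:ℝ) * y)
    have h2 := Real.sin_le_one ((k:ℝ) * y)
    have h3 := Real.neg_one_le_sin (((k:ℝ) + 1) * y)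
    have h4 := Real.sin_le_one (((k:ℝ) + 1) * y)
    rw [abs_le]
    constructor <;> nlinarith [hsnn, hs1.le]
  -- bound on the integral for t ≥ 0
  have hInt : ∀ t : ℝ, 0 ≤ t →
      ‖∫ y in (0 : ℝ)..Real.pi,
        Real.exp (-(mu * t * gam (lam / mu) y)) / gam (lam / mu) y *
          (aco (lam / mu) i y * aco (lam / mu) j y)‖
      ≤ (Real.exp (-(mu * c * t)) / c * 4) * |Real.pi - 0| := by
    intro t ht
    apply intervalIntegral.norm_integral_le_of_norm_le_const
    intro y _
    have hg := hgam y
    have hgpos : 0 < gam (lam / mu) y := lt_of_lt_of_le hc0 hg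
    have he : Real.exp (-(mu * t * gam (lam / mu) y)) ≤ Real.exp (-(mu * c * t)) := by
      apply Real.exp_le_exp.mpr
      have : mu * c * t ≤ mu * t * gam (lam / mu) y := by
        nlinarith [mul_nonneg hmu.le ht]
      linarith
    have hinv : 1 / gam (lam / mu) y ≤ 1 / c := by
      apply one_div_le_one_div_of_le hc0 hg
    have hepos : 0 < Real.exp (-(mu * t * gam (lam / mu) y)) := Real.exp_pos _
    have habs : |aco (lam / mu) i y * aco (lam / mu) j y| ≤ 4 := by
      rw [abs_mul]
      calc |aco (lam / mu) i y| * |aco (lam / mu) j y| ≤ 2 * 2 :=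
            mul_le_mul (ha i y) (ha j y) (abs_nonneg _) (by norm_num)
        _ = 4 := by norm_num
    rw [Real.norm_eq_abs, abs_mul, abs_div, abs_of_pos hepos, abs_of_pos hgpos]
    have h5 : Real.exp (-(mu * t * gam (lam / mu) y)) / gam (lam / mu) y
        ≤ Real.exp (-(mu * c * t)) / c :=
      div_le_div₀ (Real.exp_pos _).le he hc0 hg
    exact mul_le_mul h5 habs (abs_nonneg _) (by positivity)
  -- the integral term tends to 0
  have hK : Filter.Tendsto (fun t : ℝ =>
      (2 / Real.pi) * (lam / mu) ^ (((j : ℝ) - (i : ℝ)) / 2) *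
        (∫ y in (0 : ℝ)..Real.pi,
          Real.exp (-(mu * t * gam (lam / mu) y)) / gam (lam / mu) y *
            (aco (lam / mu) i y * aco (lam / mu) j y)))
      Filter.atTop (nhds 0) := by
    refine squeeze_zero_norm'
      (a := fun t => |(2 / Real.pi) * (lam / mu) ^ (((j : ℝ) - (i : ℝ)) / 2)| *
        (Real.exp (-(mu * c * t)) / c * 4 * |Real.pi - 0|)) ?_ ?_
    · filter_upwards [Filter.eventually_ge_atTop (0:ℝ)] with t ht
      rw [norm_mul, Real.norm_eq_abs]
      gcongr
      exact hInt t ht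
    · have h1 : Filter.Tendsto (fun t : ℝ => Real.exp (-(mu * c * t)))
          Filter.atTop (nhds 0) := by
        have h2 : Filter.Tendsto (fun t : ℝ => mu * c * t) Filter.atTop Filter.atTop :=
          Filter.Tendsto.const_mul_atTop (by positivity) tendsto_id
        exact Real.tendsto_exp_neg_atTop_nhds_zero.comp h2
      have := ((h1.div_const c).mul_const 4).mul_const (|Real.pi - 0|)
      have h3 := this.const_mul (|(2 / Real.pi) * (lam / mu) ^ (((j : ℝ) - (i : ℝ)) / 2)|)
      simpa using h3
  have := hK.add (tendsto_const_nhds :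
    Filter.Tendsto (fun _ : ℝ => (1 - lam / mu) * (lam / mu) ^ j) Filter.atTop _)
  simpa [pq] using this
end

section
/- Let λ, μ > 0 with ρ = λ/μ < 1, and let i ≥ 0 be an integer. Then EL_i(t) → ρ/(1−ρ) as t → ∞; equivalently, the integral term (2/π)·ρ^{(1−i)/2}·∫₀^π e^{−μ t γ(y)}/γ(y)² · a_i(y)·sin(y) dy tends to 0 as t → ∞. -/
open Real MeasureTheory Set Filter

/-- EL_i(t) → ρ/(1−ρ) as t → ∞. -/
theorem EL_tendsto_steadyState (lam mu : ℝ) (hlam : 0 < lam) (hmu : 0 < mu)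
    (hρ : lam / mu < 1) (i : ℕ) :
    Filter.Tendsto (fun t : ℝ => EL lam mu i t) Filter.atTop
      (nhds ((lam / mu) / (1 - lam / mu))) := by
  have hρ0 : 0 ≤ lam / mu := le_of_lt (div_pos hlam hmu)
  set ρ := lam / mu with hρdef
  set s := Real.sqrt ρ with hsdef
  have hs0 : 0 ≤ s := Real.sqrt_nonneg _
  have hs1 : s < 1 := by
    have h := Real.sqrt_lt_sqrt hρ0 hρ
    simpa using h
  have hssq : s ^ 2 = ρ := Real.sq_sqrt hρ0
  set c := (1 - s) ^ 2 with hcdef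
  have hc0 : 0 < c := pow_pos (by linarith) 2
  have hγ : ∀ y : ℝ, c ≤ gam ρ y := by
    intro y
    have h1 : Real.cos y ≤ 1 := Real.cos_le_one y
    simp only [gam, hcdef, ← hsdef]
    nlinarith [hssq]
  have ha : ∀ y : ℝ, |aco ρ i y * Real.sin y| ≤ 2 := by
    intro y
    have hA : |Real.sin ((i : ℝ) * y)| ≤ 1 := Real.abs_sin_le_one _
    have hB : |Real.sin (((i : ℝ) + 1) * y)| ≤ 1 := Real.abs_sin_le_one _
    have hC : |Real.sin y| ≤ 1 := Real.abs_sin_le_one _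
    have h2 : |aco ρ i y| ≤ 1 + s := by
      calc |aco ρ i y| ≤ |Real.sin ((i : ℝ) * y)| + |s * Real.sin (((i : ℝ) + 1) * y)| :=
            abs_sub _ _
        _ = |Real.sin ((i : ℝ) * y)| + s * |Real.sin (((i : ℝ) + 1) * y)| := by
            rw [abs_mul, abs_of_nonneg hs0]
        _ ≤ 1 + s * 1 := by gcongr
        _ = 1 + s := by ring
    calc |aco ρ i y * Real.sin y| = |aco ρ i y| * |Real.sin y| := abs_mul _ _
      _ ≤ (1 + s) * 1 := by
          apply mul_le_mul h2 hC (abs_nonneg _) (by linarith)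
      _ ≤ 2 := by linarith
  have hbound : ∀ t : ℝ, 0 ≤ t →
      |∫ y in (0 : ℝ)..Real.pi,
          Real.exp (-(mu * t * gam ρ y)) / (gam ρ y) ^ 2 * (aco ρ i y * Real.sin y)|
        ≤ (Real.exp (-(mu * t * c)) / c ^ 2 * 2) * |Real.pi - 0| := by
    intro t ht
    have := intervalIntegral.norm_integral_le_of_norm_le_const
      (a := (0 : ℝ)) (b := Real.pi) (C := Real.exp (-(mu * t * c)) / c ^ 2 * 2)
      (f := fun y => Real.exp (-(mu * t * gam ρ y)) / (gam ρ y) ^ 2 * (aco ρ i y * Real.sin y))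
      ?_
    · simpa [Real.norm_eq_abs] using this
    · intro y hy
      have hγy := hγ y
      have hγpos : 0 < gam ρ y := lt_of_lt_of_le hc0 hγy
      have hE : Real.exp (-(mu * t * gam ρ y)) ≤ Real.exp (-(mu * t * c)) := by
        apply Real.exp_le_exp.mpr
        have h : mu * t * c ≤ mu * t * gam ρ y :=
          mul_le_mul_of_nonneg_left hγy (by positivity)
        linarith
      have hγsq : c ^ 2 ≤ (gam ρ y) ^ 2 := by nlinarith
      rw [Real.norm_eq_abs, abs_mul]
      have h1 : |Real.exp (-(mu * t * gam ρ y)) / (gam ρ y) ^ 2|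
          ≤ Real.exp (-(mu * t * c)) / c ^ 2 := by
        rw [abs_of_nonneg (by positivity)]
        exact div_le_div₀ (by positivity) hE (by positivity) hγsq
      exact mul_le_mul h1 (ha y) (abs_nonneg _) (by positivity)
  have hI : Filter.Tendsto (fun t : ℝ => ∫ y in (0 : ℝ)..Real.pi,
      Real.exp (-(mu * t * gam ρ y)) / (gam ρ y) ^ 2 * (aco ρ i y * Real.sin y))
      Filter.atTop (nhds 0) := by
    rw [tendsto_zero_iff_norm_tendsto_zero]
    simp only [Real.norm_eq_abs]
    apply squeeze_zero' (Filter.Eventually.of_forall fun t => abs_nonneg _)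
      ((Filter.eventually_ge_atTop 0).mono fun t ht => hbound t ht)
    have h1 : Filter.Tendsto (fun t : ℝ => -(mu * t * c)) Filter.atTop Filter.atBot := by
      have h2 : Filter.Tendsto (fun t : ℝ => (mu * c) * t) Filter.atTop Filter.atTop :=
        Filter.Tendsto.const_mul_atTop (by positivity) tendsto_id
      have h3 := tendsto_neg_atTop_atBot.comp h2
      refine h3.congr fun t => ?_
      simp only [Function.comp_apply]
      ring
    have h2 : Filter.Tendsto (fun t : ℝ => Real.exp (-(mu * t * c))) Filter.atTop (nhds 0) :=
      Real.tendsto_exp_atBot.comp h1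
    have h3 := ((h2.div_const (c ^ 2)).mul_const 2).mul_const |Real.pi - 0|
    simpa using h3
  have hK := (hI.const_mul ((2 / Real.pi) * ρ ^ ((1 - (i : ℝ)) / 2))).add_const (ρ / (1 - ρ))
  simp only [mul_zero, zero_add] at hK
  simpa [EL, ← hρdef] using hK
end
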